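/- Let Y be a sublattice of an infinitely distributive lattice L. Then the O-closure of Y and the uO-closure of Y coincide, and the resulting subset is again a sublattice of L. -/
import Mathlib

universe u v w

section Defs

variable {L : Type u} [Lattice L]

/-- O-convergence of a net indexed by a preordered (directed) index type. -/
def OConv {Γ : Type v} [Preorder Γ] (f : Γ → L) (x : L) : Prop :=
  ∃ M N : Set L, M.Nonempty ∧ DirectedOn (· ≤ ·) M ∧ N.Nonempty ∧ DirectedOn (· ≥ ·) N ∧
    IsLUB M x ∧ IsGLB N x ∧
    ∀ m ∈ M, ∀ n ∈ N, ∃ γ₀ : Γ, ∀ γ : Γ, γ₀ ≤ γ → f γ ∈ Set.Icc m n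

/-- unbounded order convergence of a net -/
def UOConv {Γ : Type v} [Preorder Γ] (f : Γ → L) (x : L) : Prop :=
  ∀ s t : L, s ≤ t → OConv (fun γ => (f γ ⊓ t) ⊔ s) ((x ⊓ t) ⊔ s)

/-- infinitely distributive lattice -/
def InfDistrib (L : Type u) [Lattice L] : Prop :=
  (∀ (x : L) (S : Set L) (a : L), IsGLB S a → IsGLB ((fun s => x ⊔ s) '' S) (x ⊔ a)) ∧
  (∀ (x : L) (S : Set L) (a : L), IsLUB S a → IsLUB ((fun s => x ⊓ s) '' S) (x ⊓ a))

/-- sublattice (as a set) -/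
def IsSubl (Y : Set L) : Prop :=
  ∀ a ∈ Y, ∀ b ∈ Y, a ⊔ b ∈ Y ∧ a ⊓ b ∈ Y

/-- 1-O-adherence -/
def OAdh1 (X : Set L) : Set L :=
  {x | ∃ (Γ : Type u) (_ : Preorder Γ), IsDirected Γ (· ≤ ·) ∧ Nonempty Γ ∧
      ∃ f : Γ → L, (∀ γ, f γ ∈ X) ∧ OConv f x}

/-- 1-uO-adherence -/
def UOAdh1 (X : Set L) : Set L :=
  {x | ∃ (Γ : Type u) (_ : Preorder Γ), IsDirected Γ (· ≤ ·) ∧ Nonempty Γ ∧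
      ∃ f : Γ → L, (∀ γ, f γ ∈ X) ∧ UOConv f x}

def OClosedSet (X : Set L) : Prop := OAdh1 X = X
def UOClosedSet (X : Set L) : Prop := UOAdh1 X = X

end Defs

/-- O-closure: the smallest O-closed subset containing `X`
(the closure of `X` in the order topology). -/
def OClosure {L : Type u} [Lattice L] (X : Set L) : Set L :=
  ⋂₀ {C : Set L | X ⊆ C ∧ OClosedSet C}

/-- uO-closure: the smallest uO-closed subset containing `X`. -/
def UOClosure {L : Type u} [Lattice L] (X : Set L) : Set L :=
  ⋂₀ {C : Set L | X ⊆ C ∧ UOClosedSet C}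

section Aux

variable {L : Type u} [Lattice L]

lemma dirOn_image_le {S : Set L} {φ : L → L} (hφ : Monotone φ)
    (h : DirectedOn (· ≤ ·) S) : DirectedOn (· ≤ ·) (φ '' S) := by
  rintro _ ⟨a, ha, rfl⟩ _ ⟨b, hb, rfl⟩
  obtain ⟨c, hc, hac, hbc⟩ := h a ha b hb
  exact ⟨φ c, ⟨c, hc, rfl⟩, hφ hac, hφ hbc⟩

lemma dirOn_image_ge {S : Set L} {φ : L → L} (hφ : Monotone φ)
    (h : DirectedOn (· ≥ ·) S) : DirectedOn (· ≥ ·) (φ '' S) := by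
  rintro _ ⟨a, ha, rfl⟩ _ ⟨b, hb, rfl⟩
  obtain ⟨c, hc, hac, hbc⟩ := h a ha b hb
  exact ⟨φ c, ⟨c, hc, rfl⟩, hφ hac, hφ hbc⟩

lemma isLUB_sup_image (a : L) {S : Set L} {x : L} (hS : S.Nonempty) (h : IsLUB S x) :
    IsLUB ((fun z => a ⊔ z) '' S) (a ⊔ x) := by
  constructor
  · rintro _ ⟨s, hs, rfl⟩
    exact sup_le_sup_left (h.1 hs) a
  · intro u hu
    obtain ⟨s₀, hs₀⟩ := hS
    have ha : a ≤ u := le_trans le_sup_left (hu ⟨s₀, hs₀, rfl⟩)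
    have hx : x ≤ u := h.2 fun s hs => le_trans le_sup_right (hu ⟨s, hs, rfl⟩)
    exact sup_le ha hx

lemma isGLB_inf_image (a : L) {S : Set L} {x : L} (hS : S.Nonempty) (h : IsGLB S x) :
    IsGLB ((fun z => a ⊓ z) '' S) (a ⊓ x) := by
  constructor
  · rintro _ ⟨s, hs, rfl⟩
    exact inf_le_inf_left a (h.1 hs)
  · intro u hu
    obtain ⟨s₀, hs₀⟩ := hS
    have ha : u ≤ a := le_trans (hu ⟨s₀, hs₀, rfl⟩) inf_le_left
    have hx : u ≤ x := h.2 fun s hs => le_trans (hu ⟨s, hs, rfl⟩) inf_le_right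
    exact le_inf ha hx

variable {Γ : Type v} [Preorder Γ]

lemma oconv_const [Nonempty Γ] (x : L) : OConv (fun _ : Γ => x) x := by
  refine ⟨{x}, {x}, ⟨x, rfl⟩, ?_, ⟨x, rfl⟩, ?_, isLUB_singleton, isGLB_singleton, ?_⟩
  · rintro a rfl b rfl; exact ⟨_, rfl, le_rfl, le_rfl⟩
  · rintro a rfl b rfl; exact ⟨_, rfl, le_rfl, le_rfl⟩
  · rintro m rfl n rfl
    obtain ⟨γ₀⟩ := ‹Nonempty Γ›
    exact ⟨γ₀, fun γ _ => ⟨le_rfl, le_rfl⟩⟩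

lemma oconv_sup_left (hL : InfDistrib L) (a : L) {f : Γ → L} {x : L}
    (h : OConv f x) : OConv (fun γ => a ⊔ f γ) (a ⊔ x) := by
  obtain ⟨M, N, hMne, hMdir, hNne, hNdir, hlub, hglb, hev⟩ := h
  refine ⟨(fun z => a ⊔ z) '' M, (fun z => a ⊔ z) '' N, hMne.image _,
    dirOn_image_le (fun _ _ h => sup_le_sup_left h a) hMdir, hNne.image _,
    dirOn_image_ge (fun _ _ h => sup_le_sup_left h a) hNdir,
    isLUB_sup_image a hMne hlub, hL.1 a N x hglb, ?_⟩
  rintro _ ⟨m, hm, rfl⟩ _ ⟨n, hn, rfl⟩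
  obtain ⟨γ₀, hγ₀⟩ := hev m hm n hn
  exact ⟨γ₀, fun γ hγ => ⟨sup_le_sup_left (hγ₀ γ hγ).1 a, sup_le_sup_left (hγ₀ γ hγ).2 a⟩⟩

lemma oconv_inf_left (hL : InfDistrib L) (a : L) {f : Γ → L} {x : L}
    (h : OConv f x) : OConv (fun γ => a ⊓ f γ) (a ⊓ x) := by
  obtain ⟨M, N, hMne, hMdir, hNne, hNdir, hlub, hglb, hev⟩ := h
  refine ⟨(fun z => a ⊓ z) '' M, (fun z => a ⊓ z) '' N, hMne.image _,
    dirOn_image_le (fun _ _ h => inf_le_inf_left a h) hMdir, hNne.image _,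
    dirOn_image_ge (fun _ _ h => inf_le_inf_left a h) hNdir,
    hL.2 a M x hlub, isGLB_inf_image a hNne hglb, ?_⟩
  rintro _ ⟨m, hm, rfl⟩ _ ⟨n, hn, rfl⟩
  obtain ⟨γ₀, hγ₀⟩ := hev m hm n hn
  exact ⟨γ₀, fun γ hγ => ⟨inf_le_inf_left a (hγ₀ γ hγ).1, inf_le_inf_left a (hγ₀ γ hγ).2⟩⟩

lemma uoconv_of_oconv (hL : InfDistrib L) {f : Γ → L} {x : L}
    (h : OConv f x) : UOConv f x := by
  intro s t _
  have h1 : OConv (fun γ => s ⊔ (t ⊓ f γ)) (s ⊔ (t ⊓ x)) :=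
    oconv_sup_left hL s (oconv_inf_left hL t h)
  have hfun : (fun γ => (f γ ⊓ t) ⊔ s) = fun γ => s ⊔ (t ⊓ f γ) := by
    funext γ; rw [sup_comm, inf_comm]
  have hx : (x ⊓ t) ⊔ s = s ⊔ (t ⊓ x) := by rw [sup_comm, inf_comm]
  rw [hfun, hx]; exact h1

end Aux

section ClosureAux

variable {L : Type u} [Lattice L]

lemma mem_oadh1_of_mem {X : Set L} {x : L} (hx : x ∈ X) : x ∈ OAdh1 X := by
  refine ⟨PUnit.{u+1}, inferInstance, ⟨fun a b => ⟨a, le_rfl, le_of_eq (Subsingleton.elim _ _)⟩⟩,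
    ⟨PUnit.unit⟩, fun _ => x, fun _ => hx, oconv_const x⟩

lemma mem_uoadh1_of_mem {X : Set L} {x : L} (hx : x ∈ X) : x ∈ UOAdh1 X := by
  refine ⟨PUnit.{u+1}, inferInstance, ⟨fun a b => ⟨a, le_rfl, le_of_eq (Subsingleton.elim _ _)⟩⟩,
    ⟨PUnit.unit⟩, fun _ => x, fun _ => hx, fun s t _ => oconv_const _⟩

lemma oadh1_mono {X X' : Set L} (h : X ⊆ X') : OAdh1 X ⊆ OAdh1 X' := by
  rintro x ⟨Γ, pre, hdir, hne, f, hf, hconv⟩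
  exact ⟨Γ, pre, hdir, hne, f, fun γ => h (hf γ), hconv⟩

lemma oadh1_subset_uoadh1 (hL : InfDistrib L) (X : Set L) : OAdh1 X ⊆ UOAdh1 X := by
  rintro x ⟨Γ, pre, hdir, hne, f, hf, hconv⟩
  exact ⟨Γ, pre, hdir, hne, f, hf, uoconv_of_oconv hL hconv⟩

lemma oclosed_of_uoclosed (hL : InfDistrib L) {X : Set L} (h : UOClosedSet X) :
    OClosedSet X := by
  apply Set.Subset.antisymm
  · exact (oadh1_subset_uoadh1 hL X).trans h.subset
  · exact fun x hx => mem_oadh1_of_mem hx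

lemma subset_oclosure (Y : Set L) : Y ⊆ OClosure Y :=
  fun x hx => fun _ hD => hD.1 hx

lemma oclosure_subset {Y D : Set L} (hYD : Y ⊆ D) (hD : OClosedSet D) : OClosure Y ⊆ D :=
  Set.sInter_subset_of_mem ⟨hYD, hD⟩

lemma oclosedSet_oclosure (Y : Set L) : OClosedSet (OClosure Y) := by
  apply Set.Subset.antisymm
  · intro x hx
    intro D hD
    exact hD.2 ▸ (oadh1_mono (Set.sInter_subset_of_mem hD) hx)
  · exact fun x hx => mem_oadh1_of_mem hx

end ClosureAux

section Main

variable {L : Type u} [Lattice L]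

/-- The O-closure of a sublattice is a sublattice. -/
lemma isSubl_oclosure (hL : InfDistrib L) {Y : Set L} (hY : IsSubl Y) :
    IsSubl (OClosure Y) := by
  set C := OClosure Y with hC
  have hCc : OClosedSet C := oclosedSet_oclosure Y
  have hYC : Y ⊆ C := subset_oclosure Y
  -- the set of elements whose join/meet with a fixed a ∈ C stays in C
  have key : ∀ a ∈ C, OClosedSet {z | a ⊔ z ∈ C ∧ a ⊓ z ∈ C} := by
    intro a _
    apply Set.Subset.antisymm
    · rintro z ⟨Γ, pre, hdir, hne, f, hf, hconv⟩
      constructor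
      · have : a ⊔ z ∈ OAdh1 C :=
          ⟨Γ, pre, hdir, hne, fun γ => a ⊔ f γ, fun γ => (hf γ).1,
            oconv_sup_left hL a hconv⟩
        exact hCc ▸ this
      · have : a ⊓ z ∈ OAdh1 C :=
          ⟨Γ, pre, hdir, hne, fun γ => a ⊓ f γ, fun γ => (hf γ).2,
            oconv_inf_left hL a hconv⟩
        exact hCc ▸ this
    · exact fun z hz => mem_oadh1_of_mem hz
  have step1 : ∀ a ∈ Y, ∀ b ∈ C, a ⊔ b ∈ C ∧ a ⊓ b ∈ C := by
    intro a ha b hb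
    have hsub : Y ⊆ {z | a ⊔ z ∈ C ∧ a ⊓ z ∈ C} := by
      intro y hy
      exact ⟨hYC (hY a ha y hy).1, hYC (hY a ha y hy).2⟩
    exact oclosure_subset hsub (key a (hYC ha)) hb
  intro a ha b hb
  have hsub : Y ⊆ {z | b ⊔ z ∈ C ∧ b ⊓ z ∈ C} := by
    intro y hy
    obtain ⟨h1, h2⟩ := step1 y hy b hb
    exact ⟨by rwa [sup_comm], by rwa [inf_comm]⟩
  obtain ⟨h1, h2⟩ := oclosure_subset hsub (key b hb) ha
  exact ⟨by rwa [sup_comm] at h1, by rwa [inf_comm] at h2⟩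

/-- If every interval `[m, n]` with `m ∈ M`, `n ∈ N` meets `C`, where `M ↑ x` and `N ↓ x`,
then `x` is in the 1-O-adherence of `C`. -/
lemma mem_oadh1_of_dense {C : Set L} {x : L} {M N : Set L}
    (hMne : M.Nonempty) (hMdir : DirectedOn (· ≤ ·) M)
    (hNne : N.Nonempty) (hNdir : DirectedOn (· ≥ ·) N)
    (hlub : IsLUB M x) (hglb : IsGLB N x)
    (h : ∀ m ∈ M, ∀ n ∈ N, ∃ c ∈ C, m ≤ c ∧ c ≤ n) : x ∈ OAdh1 C := by
  choose! g hgC hg1 hg2 using h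
  refine ⟨↥M × (↥N)ᵒᵈ, inferInstance, ?_, ?_,
    fun p => g p.1.1 (OrderDual.ofDual p.2).1, fun p => hgC _ p.1.2 _ (OrderDual.ofDual p.2).2, ?_⟩
  · constructor
    rintro ⟨⟨m1, hm1⟩, n1⟩ ⟨⟨m2, hm2⟩, n2⟩
    obtain ⟨m3, hm3, h13, h23⟩ := hMdir m1 hm1 m2 hm2
    obtain ⟨n3, hn3, h13', h23'⟩ := hNdir (OrderDual.ofDual n1).1 (OrderDual.ofDual n1).2
      (OrderDual.ofDual n2).1 (OrderDual.ofDual n2).2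
    exact ⟨⟨⟨m3, hm3⟩, OrderDual.toDual ⟨n3, hn3⟩⟩, ⟨h13, h13'⟩, ⟨h23, h23'⟩⟩
  · obtain ⟨m, hm⟩ := hMne
    obtain ⟨n, hn⟩ := hNne
    exact ⟨⟨⟨m, hm⟩, OrderDual.toDual ⟨n, hn⟩⟩⟩
  · refine ⟨M, N, hMne, hMdir, hNne, hNdir, hlub, hglb, ?_⟩
    intro m hm n hn
    refine ⟨⟨⟨m, hm⟩, OrderDual.toDual ⟨n, hn⟩⟩, ?_⟩
    rintro ⟨⟨m', hm'⟩, n'⟩ ⟨hle1, hle2⟩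
    have h1 : m ≤ m' := hle1
    have h2 : (OrderDual.ofDual n').1 ≤ n := hle2
    constructor
    · exact h1.trans (hg1 m' hm' _ (OrderDual.ofDual n').2)
    · exact (hg2 m' hm' _ (OrderDual.ofDual n').2).trans h2

/-- Key lemma: an O-closed sublattice is uO-closed. -/
lemma uoadh1_subset_of_oclosed_subl (hL : InfDistrib L) {C : Set L}
    (hCsub : IsSubl C) (hCc : OClosedSet C) : UOAdh1 C ⊆ C := by
  rintro x ⟨Γ, pre, hdir, hne, f, hf, huo⟩
  obtain ⟨β₀⟩ := id hne
  set c := f β₀ with hc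
  have hcC : c ∈ C := hf β₀
  -- (★) for s ≤ t in C, (x ⊓ t) ⊔ s ∈ C
  have star : ∀ s ∈ C, ∀ t ∈ C, s ≤ t → (x ⊓ t) ⊔ s ∈ C := by
    intro s hs t ht hst
    have h1 := huo s t hst
    have : (x ⊓ t) ⊔ s ∈ OAdh1 C :=
      ⟨Γ, pre, hdir, hne, _, fun γ => (hCsub _ (hCsub _ (hf γ) t ht).2 s hs).1, h1⟩
    exact hCc ▸ this
  have hle : x ⊓ c ≤ x ⊔ c := le_trans inf_le_left le_sup_left
  have huoc := huo (x ⊓ c) (x ⊔ c) hle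
  rw [inf_sup_self, sup_inf_self] at huoc
  obtain ⟨M, N, hMne, hMdir, hNne, hNdir, hlub, hglb, hev⟩ := huoc
  have hx : x ∈ OAdh1 C := by
    refine mem_oadh1_of_dense hMne hMdir hNne hNdir hlub hglb ?_
    intro m hm n hn
    obtain ⟨γ₀, hγ₀⟩ := hev m hm n hn
    obtain ⟨hg1, hg2⟩ := hγ₀ γ₀ le_rfl
    -- g := (f γ₀ ⊓ (x ⊔ c)) ⊔ (x ⊓ c) satisfies m ≤ g ≤ n
    refine ⟨(x ⊓ (f γ₀ ⊔ c)) ⊔ (f γ₀ ⊓ c),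
      star _ (hCsub _ (hf γ₀) c hcC).2 _ (hCsub _ (hf γ₀) c hcC).1
        (le_trans inf_le_left le_sup_left), ?_, ?_⟩
    · -- m ≤ x and m ≤ f γ₀ ⊔ c
      have hmx : m ≤ x := hlub.1 hm
      have hg_le : (f γ₀ ⊓ (x ⊔ c)) ⊔ (x ⊓ c) ≤ f γ₀ ⊔ c :=
        sup_le (le_trans inf_le_left le_sup_left) (le_trans inf_le_right le_sup_right)
      have hm_fc : m ≤ f γ₀ ⊔ c := le_trans hg1 hg_le
      exact le_trans (le_inf hmx hm_fc) le_sup_left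
    · have hxn : x ≤ n := hglb.1 hn
      have h1 : x ⊓ (f γ₀ ⊔ c) ≤ n := le_trans inf_le_left hxn
      have h2 : f γ₀ ⊓ c ≤ n := by
        have : f γ₀ ⊓ c ≤ (f γ₀ ⊓ (x ⊔ c)) ⊔ (x ⊓ c) :=
          le_trans (inf_le_inf_left _ le_sup_right) le_sup_left
        exact le_trans this hg2
      exact sup_le h1 h2
  exact hCc ▸ hx

end Main

/-- For a sublattice `Y` of an infinitely distributive lattice, the O-closure and the
uO-closure of `Y` coincide, and the resulting set is again a sublattice. -/
theorem stmt7 {L : Type u} [Lattice L] (hL : InfDistrib L) (Y : Set L)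
    (hY : IsSubl Y) :
    OClosure Y = UOClosure Y ∧ IsSubl (OClosure Y) := by
  have hsubl : IsSubl (OClosure Y) := isSubl_oclosure hL hY
  have hCc : OClosedSet (OClosure Y) := oclosedSet_oclosure Y
  have hCuoc : UOClosedSet (OClosure Y) := by
    apply Set.Subset.antisymm
    · exact uoadh1_subset_of_oclosed_subl hL hsubl hCc
    · exact fun x hx => mem_uoadh1_of_mem hx
  constructor
  · apply Set.Subset.antisymm
    · intro x hx D hD
      exact hx D ⟨hD.1, oclosed_of_uoclosed hL hD.2⟩
    · exact Set.sInter_subset_of_mem ⟨subset_oclosure Y, hCuoc⟩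
  · exact hsubl
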